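/- arXiv:2110.03293 — 2 statements merged into one kernel-verified Lean document; each statement's English description precedes it below -/
import Mathlib

section
/- Let (b(p))_{p prime} be a sequence of complex numbers. Then uniformly for T ≥ 8, 2 ≤ y ≤ z ≤ T^{1/3}, and all integers k with 1 ≤ k ≤ (log T)/(3 log z), one has (1/T) ∫_T^{2T} | Σ_{y ≤ p ≤ z} b(p) p^{−it} |^{2k} dt ≪ ( k Σ_{y ≤ p ≤ z} |b(p)|² )^k + T^{−2/3} ( Σ_{y ≤ p ≤ z} |b(p)| )^{2k}, where all sums are over primes p and the implied constant is absolute. -/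
open MeasureTheory Real
open scoped Classical

/-- The modified Bessel-type function `I₀`. -/
noncomputable def I0 (t : ℝ) : ℝ := ∑' n : ℕ, (t / 2) ^ n / (Nat.factorial n : ℝ) ^ 2

/-- The constants `C_j`. -/
noncomputable def Cconst (j : ℕ) : ℝ :=
    (∫ t in (0:ℝ)..2, (Real.log (t / 2)) ^ j * Real.log (I0 t) / t ^ 2)
  + (∫ t in Set.Ioi (2 : ℝ), (Real.log (t / 2)) ^ j * (Real.log (I0 t) - t) / t ^ 2)

/-- The short Euler product `ζ(s; y)`. -/
noncomputable def zetaY (y : ℝ) (s : ℂ) : ℂ :=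
  ∏ p ∈ Finset.filter Nat.Prime (Finset.Iic ⌊y⌋₊), (1 - (p : ℂ) ^ (-s))⁻¹

/-- The distribution function `Φ_T(τ)`. -/
noncomputable def Phi (T τ : ℝ) : ℝ :=
  (volume {t : ℝ | t ∈ Set.Icc T (2 * T) ∧
    Real.exp Real.eulerMascheroniConstant * τ <
      ‖riemannZeta (1 + t * Complex.I)‖}).toReal / T

/-- The distribution function `Φ_T(τ; y)`. -/
noncomputable def PhiY (T τ y : ℝ) : ℝ :=
  (volume {t : ℝ | t ∈ Set.Icc T (2 * T) ∧
    Real.exp Real.eulerMascheroniConstant * τ <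
      ‖zetaY y (1 + t * Complex.I)‖}).toReal / T

/-- The `k`-th divisor function. -/
noncomputable def dk (k n : ℕ) : ℕ := Nat.card {f : Fin k → ℕ // ∏ i, f i = n}

/-- `D_k(y)`, the sum of `d_k(n)²/n²` over `y`-friable `n`. -/
noncomputable def Dky (k : ℕ) (y : ℝ) : ℝ :=
  ∑' n : ℕ,
    if 0 < n ∧ ∀ p ∈ n.primeFactors, (p : ℝ) ≤ y then (dk k n : ℝ) ^ 2 / (n : ℝ) ^ 2 else 0

/-- The finset of primes `p` with `y ≤ p ≤ z`. -/
noncomputable def primesBetween (y z : ℝ) : Finset ℕ :=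
  Finset.filter (fun p : ℕ => p.Prime ∧ y ≤ (p : ℝ)) (Finset.Iic ⌊z⌋₊)

/-!
Expanding the `k`-th power turns `S(t) = ∑ b(p) p^{-it}` into a Dirichlet polynomial
`S(t)^k = ∑ aₙ n^{-it}` supported on `n ≤ z^k ≤ T^{1/3}`, where `aₙ` sums over the at most `k^k`
ordered factorizations of `n` into `k` primes. Over `[T, 2T]` the diagonal of `|∑ aₙ n^{-it}|²`
contributes `T ∑ |aₙ|² ≤ T k^k (∑ |b(p)|²)^k` (Cauchy–Schwarz over the factorizations), and each
off-diagonal pair `m ≠ n` contributes at most `2 / |log (m/n)| ≤ 2 z^k ≤ 2 T^{1/3}` times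
`|aₘ aₙ|`, with `∑ |aₙ| ≤ (∑ |b(p)|)^k`.
-/

open Finset
open Complex (I)
open scoped Complex ComplexConjugate

section MeanValue

variable {ι : Type*}

lemma norm_integral_cexp_le_two_div {θ : ℝ} (hθ : θ ≠ 0) (a b : ℝ) :
    ‖∫ t in a..b, cexp (I * θ * t)‖ ≤ 2 / |θ| := by
  have hc : I * θ ≠ 0 := by simp [hθ]
  have h_norm : ∀ t : ℝ, ‖cexp (I * θ * t)‖ = 1 := fun t => by simp [Complex.norm_exp]
  rw [integral_exp_mul_complex hc, norm_div, show ‖I * θ‖ = |θ| by simp]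
  gcongr
  calc ‖cexp (I * θ * b) - cexp (I * θ * a)‖
      ≤ ‖cexp (I * θ * b)‖ + ‖cexp (I * θ * a)‖ := norm_sub_le _ _
    _ = 2 := by rw [h_norm, h_norm]; norm_num

lemma ofReal_norm_sq_sum_cexp (s : Finset ι) (c : ι → ℂ) (ω : ι → ℝ) (t : ℝ) :
    ((‖∑ i ∈ s, c i * cexp (I * ω i * t)‖ ^ 2 : ℝ) : ℂ) =
      ∑ i ∈ s, ∑ j ∈ s, c i * conj (c j) * cexp (I * (ω i - ω j : ℝ) * t) := by
  rw [Complex.ofReal_pow, ← Complex.mul_conj', map_sum, sum_mul_sum]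
  refine sum_congr rfl fun i _ => sum_congr rfl fun j _ => ?_
  rw [map_mul, ← Complex.exp_conj, mul_mul_mul_comm, ← Complex.exp_add]
  congr 2
  simp only [map_mul, Complex.conj_I, Complex.conj_ofReal]
  push_cast
  ring

lemma integral_norm_sq_sum_cexp_le {s : Finset ι} (c : ι → ℂ) {ω : ι → ℝ} {δ : ℝ} (hδ : 0 < δ)
    (hω : ∀ i ∈ s, ∀ j ∈ s, i ≠ j → δ ≤ |ω i - ω j|) {a b : ℝ} (hab : a ≤ b) :
    ∫ t in a..b, ‖∑ i ∈ s, c i * cexp (I * ω i * t)‖ ^ 2 ≤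
      (b - a) * ∑ i ∈ s, ‖c i‖ ^ 2 + 2 / δ * (∑ i ∈ s, ‖c i‖) ^ 2 := by
  set E : ι → ι → ℂ := fun i j => ∫ t in a..b, cexp (I * (ω i - ω j : ℝ) * t)
  have hE : ∀ i ∈ s, ∀ j ∈ s, ‖E i j‖ ≤ (if i = j then b - a else 0) + 2 / δ := by
    intro i hi j hj
    by_cases hij : i = j
    · have h_diag : E j j = (b - a : ℝ) := by simp [E]
      rw [hij, h_diag, Complex.norm_real, Real.norm_of_nonneg (sub_nonneg.2 hab), if_pos rfl]
      linarith [div_pos two_pos hδ]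
    · have hθ : δ ≤ |ω i - ω j| := hω i hi j hj hij
      calc ‖E i j‖ ≤ 2 / |ω i - ω j| :=
            norm_integral_cexp_le_two_div (abs_pos.1 (hδ.trans_le hθ)) a b
        _ ≤ 2 / δ := by gcongr
        _ = _ := by simp [hij]
  have hcont : ∀ i j, Continuous fun t : ℝ =>
      c i * conj (c j) * cexp (I * (ω i - ω j : ℝ) * t) := by fun_prop
  calc ∫ t in a..b, ‖∑ i ∈ s, c i * cexp (I * ω i * t)‖ ^ 2
      = (∑ i ∈ s, ∑ j ∈ s, c i * conj (c j) * E i j).re := by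
        rw [← Complex.ofReal_re (∫ t in a..b, _), ← intervalIntegral.integral_ofReal]
        simp_rw [ofReal_norm_sq_sum_cexp]
        rw [intervalIntegral.integral_finsetSum fun i _ =>
          (continuous_finsetSum _ fun j _ => hcont i j).intervalIntegrable _ _]
        simp_rw [intervalIntegral.integral_finsetSum fun j _ => (hcont _ j).intervalIntegrable _ _,
          intervalIntegral.integral_const_mul, E]
    _ ≤ ∑ i ∈ s, ∑ j ∈ s, ‖c i‖ * ‖c j‖ * ((if i = j then b - a else 0) + 2 / δ) := by
        refine (Complex.re_le_norm _).trans <| (norm_sum_le _ _).trans <|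
          sum_le_sum fun i hi => (norm_sum_le _ _).trans <| sum_le_sum fun j hj => ?_
        rw [norm_mul, norm_mul, Complex.norm_conj]
        gcongr
        exact hE i hi j hj
    _ = (b - a) * ∑ i ∈ s, ‖c i‖ ^ 2 + 2 / δ * (∑ i ∈ s, ‖c i‖) ^ 2 := by
        simp only [mul_add, sum_add_distrib]
        congr 1
        · simp only [mul_ite, mul_zero, sum_ite_eq, mul_sum]
          exact sum_congr rfl fun i hi => by rw [if_pos hi]; ring
        · rw [sq, sum_mul_sum, mul_sum]
          simp_rw [mul_sum]
          exact sum_congr rfl fun i _ => sum_congr rfl fun j _ => by ring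

end MeanValue

section Dirichlet

lemma natCast_cpow_neg_I_mul {n : ℕ} (hn : n ≠ 0) (t : ℝ) :
    (n : ℂ) ^ (-(I * t)) = cexp (I * (-Real.log n : ℝ) * t) := by
  rw [Complex.cpow_def_of_ne_zero (by exact_mod_cast hn), ← Complex.natCast_log]
  push_cast
  ring_nf

lemma inv_le_abs_log_sub_log {m n : ℕ} {M : ℝ} (hm : 0 < m) (hn : 0 < n) (hmn : m ≠ n)
    (hmM : (m : ℝ) ≤ M) (hnM : (n : ℝ) ≤ M) : M⁻¹ ≤ |Real.log m - Real.log n| := by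
  wlog hlt : n < m generalizing m n
  · rw [abs_sub_comm]
    exact this hn hm hmn.symm hnM hmM (lt_of_le_of_ne (not_lt.1 hlt) hmn)
  have hm' : (0 : ℝ) < m := by exact_mod_cast hm
  have hn' : (0 : ℝ) < n := by exact_mod_cast hn
  have h_gap : (n : ℝ) + 1 ≤ m := by exact_mod_cast hlt
  calc M⁻¹ ≤ (m : ℝ)⁻¹ := inv_anti₀ hm' hmM
    _ ≤ 1 - (m / n : ℝ)⁻¹ := by
        rw [inv_div, one_sub_div hm'.ne', ← one_div]
        exact div_le_div_of_nonneg_right (by linarith) hm'.le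
    _ ≤ Real.log (m / n) := Real.one_sub_inv_le_log_of_pos (by positivity)
    _ ≤ |Real.log m - Real.log n| := by
        rw [Real.log_div hm'.ne' hn'.ne']
        exact le_abs_self _

theorem integral_norm_sq_dirichlet_le {N : Finset ℕ} (a : ℕ → ℂ) {M : ℝ}
    (hN : ∀ n ∈ N, 0 < n ∧ (n : ℝ) ≤ M) {T₀ T₁ : ℝ} (hT : T₀ ≤ T₁) :
    ∫ t in T₀..T₁, ‖∑ n ∈ N, a n * (n : ℂ) ^ (-(I * t))‖ ^ 2 ≤
      (T₁ - T₀) * ∑ n ∈ N, ‖a n‖ ^ 2 + 2 * M * (∑ n ∈ N, ‖a n‖) ^ 2 := by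
  obtain rfl | ⟨n₀, hn₀⟩ := N.eq_empty_or_nonempty
  · simp
  have hM : 0 < M := (Nat.cast_pos.2 (hN n₀ hn₀).1).trans_le (hN n₀ hn₀).2
  have h_sep : ∀ m ∈ N, ∀ n ∈ N, m ≠ n → M⁻¹ ≤ |-Real.log m - -Real.log n| := by
    intro m hm n hn hmn
    rw [neg_sub_neg, abs_sub_comm]
    exact inv_le_abs_log_sub_log (hN m hm).1 (hN n hn).1 hmn (hN m hm).2 (hN n hn).2
  have h := integral_norm_sq_sum_cexp_le a (inv_pos.2 hM) h_sep hT
  rw [div_inv_eq_mul] at h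
  refine le_of_eq_of_le (intervalIntegral.integral_congr fun t _ => ?_) h
  rw [sum_congr rfl fun n hn => by rw [natCast_cpow_neg_I_mul (hN n hn).1.ne']]

end Dirichlet

section PowerCoefficients

variable (P : Finset ℕ) (b : ℕ → ℂ) (k : ℕ)

def powSupport : Finset ℕ :=
  (Fintype.piFinset fun _ : Fin k => P).image fun g => ∏ j, g j

def powCoeff (n : ℕ) : ℂ :=
  ∑ g ∈ Fintype.piFinset (fun _ : Fin k => P) with ∏ j, g j = n, ∏ j, b (g j)

lemma prod_mem_powSupport {g : Fin k → ℕ} (hg : g ∈ Fintype.piFinset fun _ : Fin k => P) :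
    ∏ j, g j ∈ powSupport P k :=
  mem_image_of_mem (fun g : Fin k → ℕ => ∏ j, g j) hg

lemma sum_fiberwise_powSupport {M : Type*} [AddCommMonoid M] (f : (Fin k → ℕ) → M) :
    ∑ n ∈ powSupport P k, ∑ g ∈ Fintype.piFinset (fun _ : Fin k => P) with ∏ j, g j = n, f g =
      ∑ g ∈ Fintype.piFinset (fun _ : Fin k => P), f g :=
  sum_fiberwise_of_maps_to (fun _ => prod_mem_powSupport P k) f

lemma natCast_prod_cpow {κ : Type*} (s : Finset κ) (f : κ → ℕ) (w : ℂ) :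
    ((∏ j ∈ s, f j : ℕ) : ℂ) ^ w = ∏ j ∈ s, (f j : ℂ) ^ w := by
  induction s using Finset.cons_induction with
  | empty => simp
  | cons j s hj ih => rw [prod_cons, prod_cons, Nat.cast_mul, Complex.natCast_mul_natCast_cpow, ih]

lemma sum_mul_cpow_pow (w : ℂ) :
    (∑ p ∈ P, b p * (p : ℂ) ^ w) ^ k = ∑ n ∈ powSupport P k, powCoeff P b k n * (n : ℂ) ^ w := by
  rw [sum_pow']
  simp_rw [prod_mul_distrib, ← natCast_prod_cpow]
  rw [← sum_fiberwise_powSupport]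
  refine sum_congr rfl fun n _ => ?_
  rw [powCoeff, sum_mul]
  exact sum_congr rfl fun g hg => by rw [(mem_filter.1 hg).2]

lemma sum_norm_powCoeff_le :
    ∑ n ∈ powSupport P k, ‖powCoeff P b k n‖ ≤ (∑ p ∈ P, ‖b p‖) ^ k := by
  calc ∑ n ∈ powSupport P k, ‖powCoeff P b k n‖
      ≤ ∑ n ∈ powSupport P k, ∑ g ∈ Fintype.piFinset (fun _ : Fin k => P) with ∏ j, g j = n,
          ∏ j, ‖b (g j)‖ := by
        gcongr with n
        exact (norm_sum_le _ _).trans_eq (by simp_rw [norm_prod])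
    _ = (∑ p ∈ P, ‖b p‖) ^ k := by
        rw [sum_fiberwise_powSupport, sum_pow']

lemma card_filter_prod_eq_le (hP : ∀ p ∈ P, p.Prime) (n : ℕ) :
    #{g ∈ Fintype.piFinset (fun _ : Fin k => P) | ∏ j, g j = n} ≤ k ^ k := by
  obtain h | ⟨g, hg⟩ := Finset.eq_empty_or_nonempty
    {g ∈ Fintype.piFinset (fun _ : Fin k => P) | ∏ j, g j = n}
  · simp [h]
  obtain ⟨hgP, rfl⟩ := mem_filter.1 hg
  have hgP : ∀ j, g j ∈ P := Fintype.mem_piFinset.1 hgP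
  -- unique factorization: a tuple of primes with the same product as `g` only uses entries of `g`
  have h_sub : {h ∈ Fintype.piFinset (fun _ : Fin k => P) | ∏ j, h j = ∏ j, g j} ⊆
      Fintype.piFinset fun _ : Fin k => univ.image g := by
    intro h hh
    obtain ⟨hhP, hprod⟩ := mem_filter.1 hh
    refine Fintype.mem_piFinset.2 fun j => ?_
    have hj : (h j).Prime := hP _ (Fintype.mem_piFinset.1 hhP j)
    obtain ⟨i, -, hi⟩ := hj.prime.exists_mem_finset_dvd (hprod ▸ dvd_prod_of_mem h (mem_univ j))
    exact mem_image.2 ⟨i, mem_univ i, ((Nat.prime_dvd_prime_iff_eq hj (hP _ (hgP i))).1 hi).symm⟩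
  calc _ ≤ #(Fintype.piFinset fun _ : Fin k => univ.image g) := card_le_card h_sub
    _ = #(univ.image g) ^ k := Fintype.card_piFinset_const _ _
    _ ≤ k ^ k := by
        gcongr
        exact card_image_le.trans_eq (card_fin k)

lemma sum_norm_sq_powCoeff_le (hP : ∀ p ∈ P, p.Prime) :
    ∑ n ∈ powSupport P k, ‖powCoeff P b k n‖ ^ 2 ≤ (k : ℝ) ^ k * (∑ p ∈ P, ‖b p‖ ^ 2) ^ k := by
  calc ∑ n ∈ powSupport P k, ‖powCoeff P b k n‖ ^ 2
      ≤ ∑ n ∈ powSupport P k, (k : ℝ) ^ k *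
          ∑ g ∈ Fintype.piFinset (fun _ : Fin k => P) with ∏ j, g j = n, ‖∏ j, b (g j)‖ ^ 2 := by
        gcongr with n
        calc ‖powCoeff P b k n‖ ^ 2
            ≤ (∑ g ∈ Fintype.piFinset (fun _ : Fin k => P) with ∏ j, g j = n,
                ‖∏ j, b (g j)‖) ^ 2 := by gcongr; exact norm_sum_le _ _
          _ ≤ _ := sq_sum_le_card_mul_sum_sq
          _ ≤ _ := by
              gcongr
              exact_mod_cast card_filter_prod_eq_le P k hP n
    _ = (k : ℝ) ^ k * (∑ p ∈ P, ‖b p‖ ^ 2) ^ k := by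
        rw [← mul_sum, sum_fiberwise_powSupport, sum_pow']
        simp_rw [norm_prod, prod_pow]

lemma pos_and_le_pow_of_mem_powSupport {z : ℝ} (hP : ∀ p ∈ P, 0 < p ∧ (p : ℝ) ≤ z) {n : ℕ}
    (hn : n ∈ powSupport P k) : 0 < n ∧ (n : ℝ) ≤ z ^ k := by
  obtain ⟨g, hg, rfl⟩ := mem_image.1 hn
  have hgP : ∀ j, g j ∈ P := Fintype.mem_piFinset.1 hg
  refine ⟨prod_pos fun j _ => (hP _ (hgP j)).1, ?_⟩
  push_cast
  calc ∏ j, (g j : ℝ) ≤ ∏ _j : Fin k, z :=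
        prod_le_prod (fun j _ => by positivity) fun j _ => (hP _ (hgP j)).2
    _ = z ^ k := by simp

end PowerCoefficients

lemma prime_and_le_of_mem_primesBetween {y z : ℝ} {p : ℕ} (hp : p ∈ primesBetween y z) :
    p.Prime ∧ (p : ℝ) ≤ z := by
  obtain ⟨hpz, hp, -⟩ := mem_filter.1 hp
  exact ⟨hp, (Nat.le_floor_iff' hp.ne_zero).1 (mem_Iic.1 hpz)⟩

lemma pow_le_rpow_one_div_of_le_log_div {z T c : ℝ} (hz : 1 < z) (hT : 0 < T) (hc : 0 < c)
    {k : ℕ} (hk : (k : ℝ) ≤ Real.log T / (c * Real.log z)) : z ^ k ≤ T ^ (1 / c) := by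
  have hlogz : 0 < Real.log z := Real.log_pos hz
  rw [← Real.log_le_log_iff (by positivity) (by positivity), Real.log_pow, Real.log_rpow hT]
  rw [le_div_iff₀ (by positivity)] at hk
  rw [one_div_mul_eq_div, le_div_iff₀ hc]
  linarith

lemma one_div_mul_rpow_one_div_three {T : ℝ} (hT : 0 < T) :
    1 / T * T ^ ((1 : ℝ) / 3) = 1 / T ^ ((2 : ℝ) / 3) := by
  rw [div_mul_eq_mul_div, one_mul, div_eq_div_iff hT.ne' (by positivity), one_mul,
    ← Real.rpow_add hT]
  norm_num

/-- **Lemma 2.2.** For a complex sequence `(b(p))`, uniformly for `T ≥ 8`,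
`2 ≤ y ≤ z ≤ T^{1/3}` and integers `1 ≤ k ≤ log T/(3 log z)`,
`(1/T)∫_T^{2T} |Σ_{y≤p≤z} b(p)p^{−it}|^{2k} dt
 ≪ (k Σ |b(p)|²)^k + T^{−2/3}(Σ |b(p)|)^{2k}` with an absolute implied constant. -/
theorem prime_dirichlet_polynomial_moment :
    ∃ C : ℝ, 0 < C ∧ ∀ b : ℕ → ℂ, ∀ T y z : ℝ, 8 ≤ T → 2 ≤ y → y ≤ z →
      z ≤ T ^ ((1 : ℝ) / 3) → ∀ k : ℕ, 1 ≤ k → (k : ℝ) ≤ Real.log T / (3 * Real.log z) →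
      (1 / T) * ∫ t in T..(2 * T),
          ‖∑ p ∈ primesBetween y z,
            b p * (p : ℂ) ^ (-(Complex.I * (t : ℂ)))‖ ^ (2 * k)
        ≤ C * (((k : ℝ) * ∑ p ∈ primesBetween y z, ‖b p‖ ^ 2) ^ k
          + (1 / T ^ ((2 : ℝ) / 3)) *
              (∑ p ∈ primesBetween y z, ‖b p‖) ^ (2 * k)) := by
  refine ⟨2, two_pos, fun b T y z hT hy hyz _ k _ hk => ?_⟩
  set P := primesBetween y z
  have hT₀ : 0 < T := by linarith
  have hP : ∀ p ∈ P, p.Prime ∧ (p : ℝ) ≤ z := fun p hp => prime_and_le_of_mem_primesBetween hp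
  have hN : ∀ n ∈ powSupport P k, 0 < n ∧ (n : ℝ) ≤ z ^ k :=
    fun n => pos_and_le_pow_of_mem_powSupport P k fun p hp => ⟨(hP p hp).1.pos, (hP p hp).2⟩
  have hzk : z ^ k ≤ T ^ ((1 : ℝ) / 3) :=
    pow_le_rpow_one_div_of_le_log_div (by linarith) hT₀ three_pos hk
  have h_moment := integral_norm_sq_dirichlet_le (powCoeff P b k) hN (by linarith : T ≤ 2 * T)
  simp_rw [← sum_mul_cpow_pow, norm_pow, ← pow_mul, mul_comm k 2] at h_moment
  calc 1 / T * ∫ t in T..(2 * T), ‖∑ p ∈ P, b p * (p : ℂ) ^ (-(I * t))‖ ^ (2 * k)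
      ≤ 1 / T * (T * ((k : ℝ) ^ k * (∑ p ∈ P, ‖b p‖ ^ 2) ^ k)
          + 2 * T ^ ((1 : ℝ) / 3) * ((∑ p ∈ P, ‖b p‖) ^ k) ^ 2) := by
        gcongr
        refine h_moment.trans ?_
        rw [show 2 * T - T = T by ring]
        gcongr
        · exact sum_norm_sq_powCoeff_le P b k fun p hp => (hP p hp).1
        · exact sum_norm_powCoeff_le P b k
    _ ≤ 2 * (((k : ℝ) * ∑ p ∈ P, ‖b p‖ ^ 2) ^ k
          + 1 / T ^ ((2 : ℝ) / 3) * (∑ p ∈ P, ‖b p‖) ^ (2 * k)) := by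
        have h_off : 1 / T * (2 * T ^ ((1 : ℝ) / 3) * ((∑ p ∈ P, ‖b p‖) ^ k) ^ 2) =
            2 * (1 / T ^ ((2 : ℝ) / 3) * (∑ p ∈ P, ‖b p‖) ^ (2 * k)) := by
          rw [← one_div_mul_rpow_one_div_three hT₀, ← pow_mul, mul_comm k 2]
          ring
        rw [mul_add, ← mul_assoc, one_div_mul_cancel hT₀.ne', one_mul, mul_pow, h_off]
        have : 0 ≤ (k : ℝ) ^ k * (∑ p ∈ P, ‖b p‖ ^ 2) ^ k := by positivity
        linarith
end

section
/- Let A > 0. Then uniformly for T ≥ T_0(A) and e²·log T ≤ y ≤ (log T)(log₂T)^A, one has ∫_0^∞ Φ_T(u; y) du ≪_A 1. -/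
open MeasureTheory Real
open scoped Classical

/-!
Let `K = ⌊y⌋ + 1` and `N = ⌈T⌉`. By Rankin's trick, `ζ(1 + it; y)` differs from the Dirichlet
polynomial `∑_{n ≤ N, n K-smooth} n^{-1-it}` by at most
`N^{-1/2} ∏_{p < K} (1 - p^{-1/2})⁻¹ ≤ e^{8√K} / √N`, which is at most `1` because
`y ≤ log T (log₂ T)^A = o(log² T)`. The mean value of that polynomial over `[T, 2T]` is at most
`2T + 4 (1 + log N)² ≤ 3T`: the diagonal contributes `T ∑ 1/n²`, and an off-diagonal pair
contributes `≪ 1/(mn |log(m/n)|) ≤ 1/(m (n - m))` for `m < n`. Chebyshev's inequality then gives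
`Φ_T(u; y) ≤ 12/u²` for `u ≥ 2`, and with the trivial bound `Φ_T ≤ 1` the integral is at most
`2 + 12/2`.
-/

section DirichletPolynomial

open Finset

open Complex in
lemma natCast_cpow_neg_one_add_mul_I {n : ℕ} (hn : n ≠ 0) (t : ℝ) :
    (n : ℂ) ^ (-(1 + t * I)) = ((n : ℝ)⁻¹ : ℝ) * exp ((-(t * Real.log n) : ℝ) * I) := by
  have hn' : (0 : ℝ) < n := by positivity
  rw [cpow_def_of_ne_zero (by exact_mod_cast hn), ← ofReal_natCast, ← ofReal_log hn'.le,
    ← Real.exp_log (inv_pos.2 hn'), Real.log_inv, ofReal_exp, ← Complex.exp_add]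
  congr 1
  push_cast
  ring

open Complex ComplexConjugate in
lemma norm_sq_sum_ofReal_mul_exp {ι : Type*} (s : Finset ι) (w θ : ι → ℝ) :
    ‖∑ i ∈ s, (w i : ℂ) * exp (θ i * I)‖ ^ 2
      = ∑ i ∈ s, ∑ j ∈ s, w i * w j * Real.cos (θ i - θ j) := by
  set z := ∑ i ∈ s, (w i : ℂ) * exp (θ i * I)
  have hz : ‖z‖ ^ 2 = (z * conj z).re := by
    rw [mul_conj, normSq_eq_norm_sq, ofReal_re]
  rw [hz, map_sum, Finset.sum_mul_sum, re_sum]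
  refine Finset.sum_congr rfl fun i _ => ?_
  rw [re_sum]
  refine Finset.sum_congr rfl fun j _ => ?_
  rw [map_mul, conj_ofReal, ← exp_conj, map_mul, conj_ofReal, conj_I, mul_mul_mul_comm,
    ← Complex.exp_add, ← ofReal_mul, re_ofReal_mul, show (θ i : ℂ) * I + θ j * -I
      = ((θ i - θ j : ℝ) : ℂ) * I by push_cast; ring, exp_ofReal_mul_I_re]

open Complex in
lemma norm_sq_sum_natCast_cpow {F : Finset ℕ} (hF : 0 ∉ F) (t : ℝ) :
    ‖∑ n ∈ F, (n : ℂ) ^ (-(1 + t * I))‖ ^ 2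
      = ∑ m ∈ F, ∑ n ∈ F, (m : ℝ)⁻¹ * (n : ℝ)⁻¹ * Real.cos ((Real.log m - Real.log n) * t) := by
  rw [Finset.sum_congr rfl fun n hn =>
    natCast_cpow_neg_one_add_mul_I (ne_of_mem_of_not_mem hn hF) t, norm_sq_sum_ofReal_mul_exp]
  simp_rw [← Real.cos_neg ((Real.log _ - Real.log _) * t)]
  ring_nf

open Complex in
lemma integral_norm_sq_sum_natCast_cpow {F : Finset ℕ} (hF : 0 ∉ F) (a b : ℝ) :
    ∫ t in a..b, ‖∑ n ∈ F, (n : ℂ) ^ (-(1 + t * I))‖ ^ 2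
      = ∑ m ∈ F, ∑ n ∈ F,
          (m : ℝ)⁻¹ * (n : ℝ)⁻¹ * ∫ t in a..b, Real.cos ((Real.log m - Real.log n) * t) := by
  simp_rw [norm_sq_sum_natCast_cpow hF]
  rw [intervalIntegral.integral_finsetSum fun m _ => ?_]
  · refine Finset.sum_congr rfl fun m _ => ?_
    rw [intervalIntegral.integral_finsetSum fun n _ => ?_]
    · simp_rw [intervalIntegral.integral_const_mul]
    · exact (by fun_prop : Continuous _).intervalIntegrable _ _
  · exact (by fun_prop : Continuous _).intervalIntegrable _ _

lemma abs_integral_cos_mul_le {c : ℝ} (hc : c ≠ 0) (a b : ℝ) :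
    |∫ t in a..b, Real.cos (c * t)| ≤ 2 / |c| := by
  rw [intervalIntegral.integral_comp_mul_left Real.cos hc, integral_cos, smul_eq_mul, abs_mul,
    abs_inv, div_eq_inv_mul]
  gcongr
  linarith [abs_sub (Real.sin (c * b)) (Real.sin (c * a)), Real.abs_sin_le_one (c * b),
    Real.abs_sin_le_one (c * a)]

lemma inv_mul_inv_mul_integral_cos_le {m n : ℕ} (hm : 0 < m) (hn : 0 < n) (hmn : m ≠ n)
    (a b : ℝ) :
    (m : ℝ)⁻¹ * (n : ℝ)⁻¹ * ∫ t in a..b, Real.cos ((Real.log m - Real.log n) * t)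
      ≤ 2 * ((m : ℝ)⁻¹ * (n : ℝ)⁻¹ / |Real.log m - Real.log n|) := by
  have hc : Real.log m - Real.log n ≠ 0 := fun h => hmn <| by
    exact_mod_cast Real.log_injOn_pos (Set.mem_Ioi.2 (by exact_mod_cast hm))
      (Set.mem_Ioi.2 (by exact_mod_cast hn)) (sub_eq_zero.1 h)
  calc _ ≤ (m : ℝ)⁻¹ * (n : ℝ)⁻¹ * |∫ t in a..b, Real.cos ((Real.log m - Real.log n) * t)| := by
        gcongr
        exact le_abs_self _
    _ ≤ (m : ℝ)⁻¹ * (n : ℝ)⁻¹ * (2 / |Real.log m - Real.log n|) := by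
        gcongr
        exact abs_integral_cos_mul_le hc a b
    _ = 2 * ((m : ℝ)⁻¹ * (n : ℝ)⁻¹ / |Real.log m - Real.log n|) := by ring

lemma inv_mul_inv_div_abs_log_sub_le {m n : ℕ} (hm : 0 < m) (hmn : m < n) :
    (m : ℝ)⁻¹ * (n : ℝ)⁻¹ / |Real.log m - Real.log n| ≤ ((m : ℝ) * (n - m))⁻¹ := by
  have hm' : (0 : ℝ) < m := by exact_mod_cast hm
  have hmn' : (m : ℝ) < n := by exact_mod_cast hmn
  have hn' : (0 : ℝ) < n := hm'.trans hmn'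
  have hlog : 1 - (m : ℝ) / n ≤ Real.log n - Real.log m := by
    simpa [Real.log_div hn'.ne' hm'.ne'] using Real.one_sub_inv_le_log_of_pos (div_pos hn' hm')
  have hpos : 0 < Real.log n - Real.log m := sub_pos.2 (Real.log_lt_log hm' hmn')
  have key : (n : ℝ) - m ≤ n * (Real.log n - Real.log m) := by
    have := mul_le_mul_of_nonneg_left hlog hn'.le
    rwa [mul_sub, mul_one, mul_div_cancel₀ _ hn'.ne'] at this
  calc (m : ℝ)⁻¹ * (n : ℝ)⁻¹ / |Real.log m - Real.log n|
      = ((m : ℝ) * (n * (Real.log n - Real.log m)))⁻¹ := by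
        rw [abs_sub_comm, abs_of_pos hpos, div_eq_mul_inv, ← mul_inv, ← mul_inv, mul_assoc]
    _ ≤ ((m : ℝ) * (n - m))⁻¹ := by
        gcongr

lemma sum_inv_sq_le_two {S : Finset ℕ} {N : ℕ} (hS : S ⊆ Icc 1 N) :
    ∑ m ∈ S, ((m : ℝ) ^ 2)⁻¹ ≤ 2 := by
  calc ∑ m ∈ S, ((m : ℝ) ^ 2)⁻¹ ≤ ∑ m ∈ Ioo 0 (N + 1), ((m : ℝ) ^ 2)⁻¹ := by
        refine sum_le_sum_of_subset_of_nonneg (fun m hm => ?_) fun _ _ _ => by positivity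
        have := mem_Icc.1 (hS hm)
        exact mem_Ioo.2 ⟨by omega, by omega⟩
    _ ≤ 2 := by simpa using sum_Ioo_inv_sq_le (α := ℝ) 0 (N + 1)

lemma Finset.sum_sum_erase_eq_two_nsmul {ι M : Type*} [LinearOrder ι] [AddCommMonoid M]
    (s : Finset ι) {f : ι → ι → M} (hf : ∀ i j, f i j = f j i) :
    ∑ i ∈ s, ∑ j ∈ s.erase i, f i j = 2 • ∑ i ∈ s, ∑ j ∈ s with i < j, f i j := by
  have hsplit : ∀ i ∈ s, ∑ j ∈ s.erase i, f i j
      = ∑ j ∈ s with i < j, f i j + ∑ j ∈ s with j < i, f i j := by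
    intro i _
    rw [← sum_union (disjoint_filter.2 fun j _ h h' => lt_asymm h h')]
    congr 1
    ext j
    simp only [mem_erase, mem_union, mem_filter, ne_iff_lt_or_gt]
    tauto
  rw [sum_congr rfl hsplit, sum_add_distrib, two_nsmul]
  congr 1
  rw [sum_comm' (t' := s) (s' := fun j => s.filter (j < ·)) (by simp; tauto)]
  simp_rw [hf]

lemma sum_Icc_inv_le_one_add_log (N : ℕ) : ∑ d ∈ Icc 1 N, (d : ℝ)⁻¹ ≤ 1 + Real.log N := by
  simpa [harmonic_eq_sum_Icc] using harmonic_le_one_add_log N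

lemma sum_filter_lt_inv_sub_le {S : Finset ℕ} {N : ℕ} (hS : S ⊆ Icc 1 N) (m : ℕ) :
    ∑ n ∈ S with m < n, ((n : ℝ) - m)⁻¹ ≤ ∑ d ∈ Icc 1 N, (d : ℝ)⁻¹ := by
  have hinj : Set.InjOn (· - m) (S.filter (m < ·) : Set ℕ) := by
    intro n hn n' hn' h
    simp only [coe_filter, Set.mem_ofPred_eq] at hn hn'
    simp only at h
    omega
  calc ∑ n ∈ S with m < n, ((n : ℝ) - m)⁻¹ = ∑ n ∈ S with m < n, (((n - m : ℕ) : ℝ))⁻¹ := by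
        refine sum_congr rfl fun n hn => ?_
        rw [Nat.cast_sub (mem_filter.1 hn).2.le]
    _ = ∑ d ∈ (S.filter (m < ·)).image (· - m), (d : ℝ)⁻¹ :=
        (sum_image (f := fun d : ℕ => (d : ℝ)⁻¹) hinj).symm
    _ ≤ ∑ d ∈ Icc 1 N, (d : ℝ)⁻¹ := by
        refine sum_le_sum_of_subset_of_nonneg ?_ fun _ _ _ => by positivity
        intro d hd
        obtain ⟨n, hn, rfl⟩ := mem_image.1 hd
        have := mem_Icc.1 (hS (mem_filter.1 hn).1)
        have := (mem_filter.1 hn).2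
        simp only [mem_Icc]
        omega

lemma sum_sum_lt_inv_mul_sub_le {S : Finset ℕ} {N : ℕ} (hS : S ⊆ Icc 1 N) :
    ∑ m ∈ S, ∑ n ∈ S with m < n, ((m : ℝ) * (n - m))⁻¹ ≤ (1 + Real.log N) ^ 2 := by
  have hH := sum_Icc_inv_le_one_add_log N
  have hH0 : 0 ≤ ∑ d ∈ Icc 1 N, (d : ℝ)⁻¹ := sum_nonneg fun _ _ => by positivity
  calc ∑ m ∈ S, ∑ n ∈ S with m < n, ((m : ℝ) * (n - m))⁻¹
      = ∑ m ∈ S, (m : ℝ)⁻¹ * ∑ n ∈ S with m < n, ((n : ℝ) - m)⁻¹ := by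
        simp_rw [mul_sum, mul_inv]
    _ ≤ ∑ m ∈ S, (m : ℝ)⁻¹ * ∑ d ∈ Icc 1 N, (d : ℝ)⁻¹ := by
        gcongr with m
        exact sum_filter_lt_inv_sub_le hS m
    _ ≤ ∑ m ∈ Icc 1 N, (m : ℝ)⁻¹ * ∑ d ∈ Icc 1 N, (d : ℝ)⁻¹ :=
        sum_le_sum_of_subset_of_nonneg hS fun _ _ _ => by positivity
    _ ≤ (1 + Real.log N) ^ 2 := by
        rw [← sum_mul, sq]
        exact mul_le_mul hH hH hH0 (hH0.trans hH)

open Complex in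
lemma integral_norm_sq_sum_natCast_cpow_le {F : Finset ℕ} {N : ℕ} (hF : F ⊆ Icc 1 N) {a b : ℝ}
    (hab : a ≤ b) :
    ∫ t in a..b, ‖∑ n ∈ F, (n : ℂ) ^ (-(1 + t * I))‖ ^ 2
      ≤ 2 * (b - a) + 4 * (1 + Real.log N) ^ 2 := by
  have hF0 : 0 ∉ F := fun h => by simpa using hF h
  set J : ℕ → ℕ → ℝ := fun m n => 2 * ((m : ℝ)⁻¹ * (n : ℝ)⁻¹ / |Real.log m - Real.log n|)
  have hJ : ∀ m n, J m n = J n m := fun m n => by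
    simp only [J, mul_comm ((m : ℝ)⁻¹), abs_sub_comm (Real.log m)]
  have hdiag : ∀ m : ℕ,
      (m : ℝ)⁻¹ * (m : ℝ)⁻¹ * ∫ t in a..b, Real.cos ((Real.log m - Real.log m) * t)
        = (b - a) * ((m : ℝ) ^ 2)⁻¹ := fun m => by simp [sq]; ring
  have hpos : ∀ m ∈ F, 0 < m := fun m hm => (mem_Icc.1 (hF hm)).1
  rw [integral_norm_sq_sum_natCast_cpow hF0]
  calc _ = ∑ m ∈ F, ((b - a) * ((m : ℝ) ^ 2)⁻¹ + ∑ n ∈ F.erase m,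
        (m : ℝ)⁻¹ * (n : ℝ)⁻¹ * ∫ t in a..b, Real.cos ((Real.log m - Real.log n) * t)) :=
        sum_congr rfl fun m hm => by rw [← add_sum_erase _ _ hm, hdiag]
    _ ≤ ∑ m ∈ F, ((b - a) * ((m : ℝ) ^ 2)⁻¹ + ∑ n ∈ F.erase m, J m n) := by
        gcongr with m hm n hn
        exact inv_mul_inv_mul_integral_cos_le (hpos m hm) (hpos n (mem_of_mem_erase hn))
          (ne_of_mem_erase hn).symm a b
    _ = (b - a) * ∑ m ∈ F, ((m : ℝ) ^ 2)⁻¹ + 2 * ∑ m ∈ F, ∑ n ∈ F with m < n, J m n := by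
        rw [sum_add_distrib, ← mul_sum, sum_sum_erase_eq_two_nsmul F hJ, two_nsmul, two_mul]
    _ ≤ (b - a) * 2 + 2 * (2 * ∑ m ∈ F, ∑ n ∈ F with m < n, ((m : ℝ) * (n - m))⁻¹) := by
        refine add_le_add (mul_le_mul_of_nonneg_left (sum_inv_sq_le_two hF) (sub_nonneg.2 hab))
          (mul_le_mul_of_nonneg_left ?_ zero_le_two)
        simp_rw [mul_sum]
        gcongr with m hm n hn
        exact mul_le_mul_of_nonneg_left
          (inv_mul_inv_div_abs_log_sub_le (hpos m hm) (mem_filter.1 hn).2) zero_le_two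
    _ ≤ 2 * (b - a) + 4 * (1 + Real.log N) ^ 2 := by
        have := sum_sum_lt_inv_mul_sub_le hF
        nlinarith

end DirichletPolynomial

section EulerProduct

open Finset

noncomputable def invSqrtHom : ℕ →* ℝ where
  toFun n := (√n)⁻¹
  map_one' := by simp
  map_mul' m n := by simp [Real.sqrt_mul (Nat.cast_nonneg m), mul_comm]

lemma invSqrtHom_apply (n : ℕ) : invSqrtHom n = (√(n : ℝ))⁻¹ := rfl

lemma sum_Icc_inv_sqrt_le (K : ℕ) : ∑ n ∈ Icc 1 K, (√(n : ℝ))⁻¹ ≤ 2 * √(K : ℝ) := by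
  induction K with
  | zero => simp
  | succ K ih =>
    rw [sum_Icc_succ_top (by omega), Nat.cast_succ]
    have h0 : 0 < √((K : ℝ) + 1) := by positivity
    have hK : √(K : ℝ) ≤ √((K : ℝ) + 1) := Real.sqrt_le_sqrt (by linarith)
    have hstep : (√((K : ℝ) + 1))⁻¹ ≤ 2 * √((K : ℝ) + 1) - 2 * √(K : ℝ) := by
      rw [inv_le_iff_one_le_mul₀ h0]
      nlinarith [Real.sq_sqrt (Nat.cast_nonneg (α := ℝ) K),
        Real.sq_sqrt (by positivity : (0 : ℝ) ≤ K + 1)]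
    linarith

lemma one_sub_inv_le_exp {x : ℝ} (hx0 : 0 ≤ x) (hx : x ≤ 3 / 4) : (1 - x)⁻¹ ≤ Real.exp (4 * x) := by
  refine le_trans ?_ (Real.add_one_le_exp (4 * x))
  rw [inv_le_iff_one_le_mul₀ (by linarith)]
  nlinarith

lemma prod_primesBelow_one_sub_inv_sqrt_inv_le (K : ℕ) :
    ∏ p ∈ K.primesBelow, (1 - (√(p : ℝ))⁻¹)⁻¹ ≤ Real.exp (8 * √(K : ℝ)) := by
  have hsqrt : ∀ p ∈ K.primesBelow, 4 / 3 ≤ √(p : ℝ) := fun p hp => by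
    rw [Real.le_sqrt (by norm_num) (by positivity)]
    have : (2 : ℝ) ≤ p := by exact_mod_cast (Nat.prime_of_mem_primesBelow hp).two_le
    linarith
  have hsub : K.primesBelow ⊆ Icc 1 K := fun p hp => mem_Icc.2
    ⟨(Nat.prime_of_mem_primesBelow hp).one_lt.le, (Nat.lt_of_mem_primesBelow hp).le⟩
  calc ∏ p ∈ K.primesBelow, (1 - (√(p : ℝ))⁻¹)⁻¹
      ≤ ∏ p ∈ K.primesBelow, Real.exp (4 * (√(p : ℝ))⁻¹) := by
        refine prod_le_prod (fun p hp => ?_) fun p hp => ?_ <;>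
          have := inv_anti₀ (by norm_num) (hsqrt p hp)
        · exact inv_nonneg.2 (by linarith)
        · exact one_sub_inv_le_exp (by positivity) (by linarith)
    _ = Real.exp (4 * ∑ p ∈ K.primesBelow, (√(p : ℝ))⁻¹) := by rw [← Real.exp_sum, mul_sum]
    _ ≤ Real.exp (8 * √(K : ℝ)) := by
        refine Real.exp_le_exp.2 ?_
        calc 4 * ∑ p ∈ K.primesBelow, (√(p : ℝ))⁻¹ ≤ 4 * ∑ n ∈ Icc 1 K, (√(n : ℝ))⁻¹ := by
              gcongr
          _ ≤ 8 * √(K : ℝ) := by linarith [sum_Icc_inv_sqrt_le K]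

lemma norm_natCast_cpow_neg_le_inv {n : ℕ} (hn : 0 < n) {s : ℂ} (hs : 1 ≤ s.re) :
    ‖(n : ℂ) ^ (-s)‖ ≤ (n : ℝ)⁻¹ := by
  rw [Complex.norm_natCast_cpow_of_pos hn, Complex.neg_re, ← Real.rpow_neg_one]
  exact Real.rpow_le_rpow_of_exponent_le (by exact_mod_cast hn) (by linarith)

lemma norm_natCast_cpow_neg_le_inv_sqrt_mul_inv_sqrt {N n : ℕ} (hN : 0 < N) (hNn : N ≤ n) {s : ℂ}
    (hs : 1 ≤ s.re) : ‖(n : ℂ) ^ (-s)‖ ≤ (√(N : ℝ))⁻¹ * (√(n : ℝ))⁻¹ := by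
  have hN' : (0 : ℝ) < N := by exact_mod_cast hN
  have hNn' : (N : ℝ) ≤ n := by exact_mod_cast hNn
  calc ‖(n : ℂ) ^ (-s)‖ ≤ (n : ℝ)⁻¹ := norm_natCast_cpow_neg_le_inv (hN.trans_le hNn) hs
    _ = (√(n : ℝ) * √(n : ℝ))⁻¹ := by rw [Real.mul_self_sqrt n.cast_nonneg]
    _ ≤ (√(N : ℝ) * √(n : ℝ))⁻¹ := by
        gcongr
        exact mul_pos (Real.sqrt_pos.2 hN') (Real.sqrt_pos.2 (hN'.trans_le hNn'))
    _ = (√(N : ℝ))⁻¹ * (√(n : ℝ))⁻¹ := mul_inv _ _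

lemma norm_invSqrtHom_lt_one {p : ℕ} (hp : p.Prime) : ‖invSqrtHom p‖ < 1 := by
  rw [invSqrtHom_apply, norm_inv, Real.norm_of_nonneg (Real.sqrt_nonneg _)]
  exact inv_lt_one_of_one_lt₀ (Real.lt_sqrt_of_sq_lt (by norm_num; exact_mod_cast hp.one_lt))

lemma norm_prod_primesBelow_sub_sum_smoothNumbers_le {s : ℂ} (hs : 1 ≤ s.re) (K : ℕ) {N : ℕ}
    (hN : 0 < N) :
    ‖∏ p ∈ K.primesBelow, (1 - (p : ℂ) ^ (-s))⁻¹
        - ∑ n ∈ Icc 1 N with n ∈ K.smoothNumbers, (n : ℂ) ^ (-s)‖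
      ≤ Real.exp (8 * √(K : ℝ)) / √(N : ℝ) := by
  have hs0 : s ≠ 0 := fun h => by norm_num [h] at hs
  set S := K.smoothNumbers
  set G := (Icc 1 N).filter (· ∈ S)
  have hζ : HasSum (S.indicator fun n => (n : ℂ) ^ (-s))
      (∏ p ∈ K.primesBelow, (1 - (p : ℂ) ^ (-s))⁻¹) := hasSum_subtype_iff_indicator.1
    (EulerProduct.summable_and_hasSum_smoothNumbers_prod_primesBelow_geometric
      (f := (riemannZetaSummandHom hs0).toMonoidHom) (fun hp => (norm_natCast_cpow_neg_le_inv
        hp.pos hs).trans_lt (inv_lt_one_of_one_lt₀ (by exact_mod_cast hp.one_lt))) K).2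
  have hmaj : HasSum (S.indicator fun n => (√(n : ℝ))⁻¹)
      (∏ p ∈ K.primesBelow, (1 - (√(p : ℝ))⁻¹)⁻¹) := hasSum_subtype_iff_indicator.1
    (EulerProduct.summable_and_hasSum_smoothNumbers_prod_primesBelow_geometric
      norm_invSqrtHom_lt_one K).2
  have hG : HasSum ((G : Set ℕ).indicator fun n => (n : ℂ) ^ (-s)) (∑ n ∈ G, (n : ℂ) ^ (-s)) := by
    rw [← sum_indicator_subset _ subset_rfl]
    exact hasSum_sum_of_ne_finset_zero fun n hn => Set.indicator_of_notMem (mt mem_coe.1 hn) _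
  refine ((hζ.sub hG).norm_le_of_bounded (hmaj.mul_left (√(N : ℝ))⁻¹) fun n => ?_).trans ?_
  · by_cases hnS : n ∈ S
    · by_cases hnG : n ∈ G
      · simp [Set.indicator_of_mem hnS, Set.indicator_of_mem (mem_coe.2 hnG)]
        positivity
      · have hn : N < n := by
          by_contra h
          exact hnG (mem_filter.2 ⟨mem_Icc.2 ⟨Nat.one_le_iff_ne_zero.2 hnS.1, not_lt.1 h⟩, hnS⟩)
        simp only [Set.indicator_of_mem hnS, Set.indicator_of_notMem (mt mem_coe.1 hnG), sub_zero]
        exact norm_natCast_cpow_neg_le_inv_sqrt_mul_inv_sqrt hN hn.le hs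
    · have hnG : n ∉ (G : Set ℕ) := fun h => hnS (mem_filter.1 (mem_coe.1 h)).2
      simp [Set.indicator_of_notMem hnS, Set.indicator_of_notMem hnG]
  · rw [inv_mul_eq_div]
    gcongr
    exact prod_primesBelow_one_sub_inv_sqrt_inv_le K

lemma zetaY_eq_prod_primesBelow (y : ℝ) (s : ℂ) :
    zetaY y s = ∏ p ∈ (⌊y⌋₊ + 1).primesBelow, (1 - (p : ℂ) ^ (-s))⁻¹ := by
  rw [zetaY]
  congr 1
  ext p
  simp [Nat.primesBelow]

end EulerProduct

section DistributionFunction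

open Set

lemma volume_toReal_le_integral_sq_div_sq {a b c : ℝ} (hab : a ≤ b) (hc : 0 < c) {φ : ℝ → ℝ}
    (hφ : IntervalIntegrable (fun t => φ t ^ 2) volume a b) {S : Set ℝ}
    (hS : ∀ t ∈ S, t ∈ Icc a b ∧ c ≤ φ t) :
    (volume S).toReal ≤ (∫ t in a..b, φ t ^ 2) / c ^ 2 := by
  set μ := volume.restrict (Icc a b)
  have hmarkov := mul_meas_ge_le_integral_of_nonneg (ae_of_all μ fun t => sq_nonneg (φ t))
    ((intervalIntegrable_iff_integrableOn_Icc_of_le hab).1 hφ) (c ^ 2)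
  have hsub : volume S ≤ μ {t | c ^ 2 ≤ φ t ^ 2} := by
    rw [Measure.restrict_apply' measurableSet_Icc]
    exact measure_mono fun t ht => ⟨pow_le_pow_left₀ hc.le (hS t ht).2 2, (hS t ht).1⟩
  rw [le_div_iff₀ (by positivity), intervalIntegral.integral_of_le hab,
    ← integral_Icc_eq_integral_Ioc, mul_comm]
  exact (mul_le_mul_of_nonneg_left (ENNReal.toReal_mono (measure_ne_top μ _) hsub)
    (by positivity)).trans hmarkov

lemma setIntegral_Ioi_le_of_le_one_of_le_div_sq {Φ : ℝ → ℝ} {a M : ℝ} (ha : 0 < a)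
    (h0 : ∀ u, 0 < u → 0 ≤ Φ u) (h1 : ∀ u, 0 < u → Φ u ≤ 1) (h2 : ∀ u, a < u → Φ u ≤ M / u ^ 2) :
    ∫ u in Ioi 0, Φ u ≤ a + M / a := by
  set ψ : ℝ → ℝ := fun u => if u ≤ a then 1 else M * u ^ (-2 : ℝ)
  have hψ₁ : EqOn ψ (fun _ => 1) (Ioc 0 a) := fun u hu => if_pos hu.2
  have hψ₂ : EqOn ψ (fun u => M * u ^ (-2 : ℝ)) (Ioi a) := fun u hu => if_neg (not_le.2 hu)
  have hint₁ : IntegrableOn ψ (Ioc 0 a) :=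
    (integrableOn_const (by simp)).congr_fun hψ₁.symm measurableSet_Ioc
  have hint₂ : IntegrableOn ψ (Ioi a) :=
    IntegrableOn.congr_fun
      ((integrableOn_Ioi_rpow_of_lt (by norm_num : (-2 : ℝ) < -1) ha).const_mul M) hψ₂.symm
      measurableSet_Ioi
  have hunion := Ioc_union_Ioi_eq_Ioi ha.le
  calc ∫ u in Ioi 0, Φ u ≤ ∫ u in Ioi 0, ψ u := by
        refine integral_mono_of_nonneg ((ae_restrict_iff' measurableSet_Ioi).2 (ae_of_all _ h0))
          (hunion ▸ hint₁.union hint₂) ((ae_restrict_iff' measurableSet_Ioi).2 (ae_of_all _ ?_))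
        intro u hu
        by_cases hua : u ≤ a
        · simpa [ψ, hua] using h1 u hu
        · simp only [ψ, hua, if_false]
          rw [Real.rpow_neg hu.le, Real.rpow_two, ← div_eq_mul_inv]
          exact h2 u (not_le.1 hua)
    _ = a + M / a := by
        rw [← hunion, setIntegral_union (Ioc_disjoint_Ioi le_rfl) measurableSet_Ioi hint₁ hint₂,
          setIntegral_congr_fun measurableSet_Ioc hψ₁, setIntegral_congr_fun measurableSet_Ioi hψ₂,
          integral_const_mul, integral_Ioi_rpow_of_lt (by norm_num) ha]
        norm_num [Real.rpow_neg_one, div_eq_mul_inv, ha.le]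

lemma PhiY_nonneg {T : ℝ} (hT : 0 ≤ T) (u y : ℝ) : 0 ≤ PhiY T u y :=
  div_nonneg ENNReal.toReal_nonneg hT

lemma PhiY_le_one {T : ℝ} (hT : 0 < T) (u y : ℝ) : PhiY T u y ≤ 1 := by
  rw [PhiY, div_le_one hT]
  calc _ ≤ (volume (Icc T (2 * T))).toReal :=
        ENNReal.toReal_mono measure_Icc_lt_top.ne (measure_mono fun t ht => ht.1)
    _ = T := by rw [Real.volume_Icc, ENNReal.toReal_ofReal (by linarith)]; ring

open Complex in
lemma PhiY_le_twelve_div_sq {T y u : ℝ} {N : ℕ} (hNT : N ≤ 2 * T)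
    (htail : Real.exp (8 * √((⌊y⌋₊ : ℝ) + 1)) ≤ √(N : ℝ)) (hlog : 8 * (1 + Real.log N) ^ 2 ≤ N)
    (hu : 2 ≤ u) :
    PhiY T u y ≤ 12 / u ^ 2 := by
  have hN : 0 < N := Nat.pos_of_ne_zero fun h => by norm_num [h] at hlog
  have hT : 0 < T := by
    have : (0 : ℝ) < N := by exact_mod_cast hN
    linarith
  set F := (Finset.Icc 1 N).filter (· ∈ (⌊y⌋₊ + 1).smoothNumbers)
  set g : ℝ → ℂ := fun t => ∑ n ∈ F, (n : ℂ) ^ (-(1 + t * I))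
  have hg : Continuous g := continuous_finsetSum _ fun n hn => by
    have : (n : ℂ) ≠ 0 := by
      have := (Finset.mem_Icc.1 (Finset.mem_filter.1 hn).1).1
      exact_mod_cast (by omega : n ≠ 0)
    exact Continuous.const_cpow (by fun_prop) (Or.inl this)
  have hclose : ∀ t : ℝ, ‖zetaY y (1 + t * I)‖ ≤ ‖g t‖ + 1 := by
    intro t
    have htail' := norm_prod_primesBelow_sub_sum_smoothNumbers_le (s := 1 + t * I) (by simp)
      (⌊y⌋₊ + 1) hN
    rw [← zetaY_eq_prod_primesBelow] at htail'
    have : Real.exp (8 * √((⌊y⌋₊ + 1 : ℕ) : ℝ)) / √(N : ℝ) ≤ 1 :=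
      div_le_one_of_le₀ (by exact_mod_cast htail) (Real.sqrt_nonneg _)
    linarith [norm_le_norm_add_norm_sub' (zetaY y (1 + t * I)) (g t)]
  have hmoment : ∫ t in T..2 * T, ‖g t‖ ^ 2 ≤ 3 * T := by
    refine (integral_norm_sq_sum_natCast_cpow_le (Finset.filter_subset _ _) (by linarith)).trans ?_
    linarith
  have hγ : 1 ≤ Real.exp Real.eulerMascheroniConstant :=
    Real.one_le_exp (by linarith [Real.one_half_lt_eulerMascheroniConstant])
  have hγu : u ≤ Real.exp Real.eulerMascheroniConstant * u := le_mul_of_one_le_left (by linarith) hγ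
  have hvol := volume_toReal_le_integral_sq_div_sq (φ := fun t => ‖g t‖)
    (c := Real.exp Real.eulerMascheroniConstant * u / 2) (by linarith) (by positivity)
    ((hg.norm.pow 2).intervalIntegrable _ _)
    (S := {t | t ∈ Icc T (2 * T) ∧ Real.exp Real.eulerMascheroniConstant * u <
      ‖zetaY y (1 + t * I)‖}) fun t ht => ⟨ht.1, by linarith [hclose t, ht.2]⟩
  rw [PhiY, div_le_iff₀ hT]
  calc _ ≤ (∫ t in T..2 * T, ‖g t‖ ^ 2) / (Real.exp Real.eulerMascheroniConstant * u / 2) ^ 2 :=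
        hvol
    _ ≤ 3 * T / (u / 2) ^ 2 := by gcongr
    _ = 12 / u ^ 2 * T := by ring

end DistributionFunction

section Asymptotics

open Filter

lemma eventually_exp_sqrt_le_sqrt (A : ℝ) :
    ∀ᶠ T in atTop, Real.exp (8 * √(Real.log T * Real.log (Real.log T) ^ A + 1)) ≤ √T := by
  have hL : ∀ᶠ L in atTop, 16 * √(L * Real.log L ^ A + 1) ≤ L := by
    filter_upwards [(isLittleO_log_rpow_rpow_atTop A one_pos).bound
      (by norm_num : (0 : ℝ) < 1 / 1024), eventually_ge_atTop 32] with L hlog hL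
    rw [Real.rpow_one, Real.norm_eq_abs, Real.norm_of_nonneg (by linarith : (0 : ℝ) ≤ L)] at hlog
    have : L * Real.log L ^ A ≤ L * (1 / 1024 * L) :=
      mul_le_mul_of_nonneg_left ((le_abs_self _).trans hlog) (by linarith)
    have : √(L * Real.log L ^ A + 1) ≤ L / 16 :=
      Real.sqrt_le_iff.2 ⟨by linarith, by nlinarith⟩
    linarith
  filter_upwards [Real.tendsto_log_atTop.eventually hL, eventually_gt_atTop 0] with T hT hT0
  have hsqrt : √T = Real.exp (Real.log T / 2) := by
    rw [Real.sqrt_eq_rpow, Real.rpow_def_of_pos hT0]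
    ring_nf
  rw [hsqrt]
  gcongr
  linarith

lemma eventually_sq_one_add_log_le : ∀ᶠ x : ℝ in atTop, 8 * (1 + Real.log x) ^ 2 ≤ x := by
  filter_upwards [(Real.isLittleO_pow_log_id_atTop (n := 2)).bound (by norm_num : (0 : ℝ) < 1 / 32),
    eventually_ge_atTop (Real.exp 1)] with x hlog hx
  have hx0 : 0 < x := (Real.exp_pos 1).trans_le hx
  have h1 : 1 ≤ Real.log x := (Real.le_log_iff_exp_le hx0).2 hx
  rw [Real.norm_of_nonneg (by positivity), id, Real.norm_of_nonneg hx0.le] at hlog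
  nlinarith

end Asymptotics

theorem first_moment_bounded_general (A : ℝ) :
    ∃ T0 C : ℝ, 0 < C ∧ ∀ T y : ℝ, T0 ≤ T →
      Real.exp 2 * Real.log T ≤ y → y ≤ Real.log T * Real.log (Real.log T) ^ A →
      (∫ u in Set.Ioi (0 : ℝ), PhiY T u y) ≤ C := by
  have hceil : Filter.Tendsto (fun T : ℝ => (⌈T⌉₊ : ℝ)) Filter.atTop Filter.atTop :=
    tendsto_natCast_atTop_atTop.comp tendsto_nat_ceil_atTop
  obtain ⟨T0, hlarge⟩ := Filter.eventually_atTop.1 <| (Filter.eventually_ge_atTop 1).and <|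
    (eventually_exp_sqrt_le_sqrt A).and (hceil.eventually eventually_sq_one_add_log_le)
  refine ⟨T0, 2 + 12 / 2, by norm_num, fun T y hT hy₀ hy => ?_⟩
  obtain ⟨hT1, htail, hlog⟩ := hlarge T hT
  have hTpos : 0 < T := zero_lt_one.trans_le hT1
  have hy0 : 0 ≤ y := (mul_nonneg (Real.exp_pos 2).le (Real.log_nonneg hT1)).trans hy₀
  have hTN : T ≤ ⌈T⌉₊ := Nat.le_ceil T
  have hNT : (⌈T⌉₊ : ℝ) ≤ 2 * T := by linarith [Nat.ceil_lt_add_one hTpos.le]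
  refine setIntegral_Ioi_le_of_le_one_of_le_div_sq two_pos (fun u _ => PhiY_nonneg hTpos.le u y)
    (fun u _ => PhiY_le_one hTpos u y) fun u hu => PhiY_le_twelve_div_sq hNT ?_ hlog hu.le
  calc Real.exp (8 * √((⌊y⌋₊ : ℝ) + 1))
      ≤ Real.exp (8 * √(Real.log T * Real.log (Real.log T) ^ A + 1)) := by
        gcongr
        exact (Nat.floor_le hy0).trans hy
    _ ≤ √T := htail
    _ ≤ √(⌈T⌉₊ : ℝ) := Real.sqrt_le_sqrt hTN

/-- For `A > 0`, uniformly for `T ≥ T₀(A)` and `e²·log T ≤ y ≤ (log T)(log₂T)^A`,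
`∫_0^∞ Φ_T(u; y) du ≪_A 1`. -/
theorem first_moment_bounded (A : ℝ) (hA : 0 < A) :
    ∃ T0 C : ℝ, 0 < C ∧ ∀ T y : ℝ, T0 ≤ T →
      Real.exp 2 * Real.log T ≤ y → y ≤ Real.log T * Real.log (Real.log T) ^ A →
      (∫ u in Set.Ioi (0 : ℝ), PhiY T u y) ≤ C :=
  first_moment_bounded_general A
end
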